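/- Let q(θ) = Φ(x* - √M μ(γ(θ))) with γ(θ)=θ/M, Φ and φ the standard normal cdf and pdf, μ twice differentiable with μ' < 0 and μ'' > 0. Define b(θ) = -log(q(θ)/q(0)) + θ q'(θ)/q(θ). Then b is strictly decreasing on (0,∞). -/

import Mathlib

open Real MeasureTheory Set Filter

noncomputable def stdNormalPdf (x : ℝ) : ℝ :=
  (Real.sqrt (2 * Real.pi))⁻¹ * Real.exp (-x ^ 2 / 2)

noncomputable def stdNormalCdf (x : ℝ) : ℝ :=
  ∫ t in Set.Iic x, stdNormalPdf t

lemma pdf_pos (x : ℝ) : 0 < stdNormalPdf x := by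
  unfold stdNormalPdf
  positivity

lemma pdf_cont : Continuous stdNormalPdf := by
  unfold stdNormalPdf
  fun_prop

lemma pdf_eq (x : ℝ) : stdNormalPdf x = (Real.sqrt (2 * Real.pi))⁻¹ * Real.exp (-(2⁻¹) * x ^ 2) := by
  unfold stdNormalPdf; ring_nf

lemma pdf_integrable : Integrable stdNormalPdf := by
  have h := (integrable_exp_neg_mul_sq (by norm_num : (0:ℝ) < 2⁻¹)).const_mul
    (Real.sqrt (2 * Real.pi))⁻¹
  refine h.congr (Eventually.of_forall fun x => ?_)
  rw [pdf_eq]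

lemma pdf_mul_integrable : Integrable (fun x => x * stdNormalPdf x) := by
  have h := (integrable_mul_exp_neg_mul_sq (by norm_num : (0:ℝ) < 2⁻¹)).const_mul
    (Real.sqrt (2 * Real.pi))⁻¹
  refine h.congr (Eventually.of_forall fun x => ?_)
  simp only [pdf_eq]; ring

lemma hasDerivAt_pdf (x : ℝ) : HasDerivAt stdNormalPdf (-x * stdNormalPdf x) x := by
  have h : HasDerivAt (fun y : ℝ => -y ^ 2 / 2) (-x) x := by
    have := ((hasDerivAt_pow 2 x).neg).div_const 2
    refine this.congr_deriv ?_
    simp; ring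
  have h2 := (h.exp).const_mul (Real.sqrt (2 * Real.pi))⁻¹
  refine h2.congr_deriv ?_
  unfold stdNormalPdf; ring

lemma pdf_tendsto_atBot : Tendsto stdNormalPdf atBot (nhds 0) := by
  have h1 : Tendsto (fun x : ℝ => (-x) ^ 2) atBot atTop :=
    (tendsto_pow_atTop (by norm_num : 2 ≠ 0)).comp tendsto_neg_atBot_atTop
  have h2 : Tendsto (fun x : ℝ => -x ^ 2 / 2) atBot atBot := by
    have := tendsto_neg_atTop_atBot.comp (h1.atTop_div_const (by norm_num : (0:ℝ) < 2))
    refine this.congr fun x => ?_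
    simp; ring
  have h3 := (Real.tendsto_exp_atBot.comp h2).const_mul (Real.sqrt (2 * Real.pi))⁻¹
  rw [show (0:ℝ) = (Real.sqrt (2 * Real.pi))⁻¹ * 0 by ring] at h3 ⊢
  simp only [mul_zero] at h3 ⊢
  refine h3.congr fun x => ?_
  simp [stdNormalPdf, Function.comp]

lemma pdf_neg_mul_integrable : Integrable (fun t : ℝ => -t * stdNormalPdf t) := by
  refine pdf_mul_integrable.neg.congr (Eventually.of_forall fun t => ?_)
  simp only [Pi.neg_apply]; ring

lemma pdf_sub_mul_integrable (x : ℝ) : Integrable (fun t : ℝ => (x - t) * stdNormalPdf t) := by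
  have : (fun t : ℝ => (x - t) * stdNormalPdf t)
      = fun t => x * stdNormalPdf t + -t * stdNormalPdf t := funext fun t => by ring
  rw [this]
  exact (pdf_integrable.const_mul x).add pdf_neg_mul_integrable

lemma cdf_pos (x : ℝ) : 0 < stdNormalCdf x := by
  unfold stdNormalCdf
  rw [MeasureTheory.integral_pos_iff_support_of_nonneg (fun t => (pdf_pos t).le)
    (pdf_integrable.integrableOn)]
  have : Function.support stdNormalPdf = Set.univ := by
    ext t; simp [Function.support, (pdf_pos t).ne']
  rw [this]
  simp [Real.volume_Iic]

lemma cdf_eq (x : ℝ) : stdNormalCdf x = stdNormalCdf 0 + ∫ t in (0:ℝ)..x, stdNormalPdf t := by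
  unfold stdNormalCdf
  rw [← intervalIntegral.integral_Iic_sub_Iic pdf_integrable.integrableOn
    pdf_integrable.integrableOn]
  ring

lemma hasDerivAt_cdf (x : ℝ) : HasDerivAt stdNormalCdf (stdNormalPdf x) x := by
  have h : HasDerivAt (fun u => ∫ t in (0:ℝ)..u, stdNormalPdf t) (stdNormalPdf x) x :=
    intervalIntegral.integral_hasDerivAt_right pdf_integrable.intervalIntegrable
      (pdf_cont.stronglyMeasurableAtFilter _ _) pdf_cont.continuousAt
  have := h.const_add (stdNormalCdf 0)
  exact HasDerivAt.congr_of_eventuallyEq this (Eventually.of_forall fun t => (cdf_eq t))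

lemma integral_neg_mul_pdf (x : ℝ) :
    ∫ t in Set.Iic x, -t * stdNormalPdf t = stdNormalPdf x := by
  have := MeasureTheory.integral_Iic_of_hasDerivAt_of_tendsto'
    (f := stdNormalPdf) (f' := fun t => -t * stdNormalPdf t) (a := x)
    (fun t _ => hasDerivAt_pdf t) pdf_neg_mul_integrable.integrableOn pdf_tendsto_atBot
  simpa using this

lemma mills (x : ℝ) : 0 < x * stdNormalCdf x + stdNormalPdf x := by
  have key : x * stdNormalCdf x + stdNormalPdf x
      = ∫ t in Set.Iic x, (x - t) * stdNormalPdf t := by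
    rw [MeasureTheory.integral_congr_ae (Eventually.of_forall
      (fun t => by ring : ∀ t, (x - t) * stdNormalPdf t
        = x * stdNormalPdf t + -t * stdNormalPdf t))]
    rw [MeasureTheory.integral_add ((pdf_integrable.const_mul x).integrableOn)
      pdf_neg_mul_integrable.integrableOn]
    rw [MeasureTheory.integral_const_mul, integral_neg_mul_pdf]
    rfl
  rw [key]
  rw [MeasureTheory.integral_pos_iff_support_of_nonneg_ae
    (by filter_upwards [MeasureTheory.ae_restrict_mem measurableSet_Iic] with t ht
        exact mul_nonneg (by linarith [ht.out]) (pdf_pos t).le)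
    (pdf_sub_mul_integrable x).integrableOn]
  have hsub : Set.Iio x ⊆ Function.support fun t => (x - t) * stdNormalPdf t := by
    intro t ht
    exact ne_of_gt (mul_pos (by linarith [ht.out]) (pdf_pos t))
  calc (0:ENNReal) < volume (Set.Iio x) := by simp [Real.volume_Iio]
    _ ≤ (volume.restrict (Set.Iic x)) (Function.support fun t => (x - t) * stdNormalPdf t) := by
        rw [MeasureTheory.Measure.restrict_apply' measurableSet_Iic]
        exact measure_mono (Set.subset_inter hsub Iio_subset_Iic_self)

noncomputable def mr (x : ℝ) : ℝ := stdNormalPdf x / stdNormalCdf x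

lemma mr_pos (x : ℝ) : 0 < mr x := div_pos (pdf_pos x) (cdf_pos x)

lemma hasDerivAt_mr (x : ℝ) : HasDerivAt mr
    ((-x * stdNormalPdf x * stdNormalCdf x - stdNormalPdf x * stdNormalPdf x)
      / stdNormalCdf x ^ 2) x :=
  (hasDerivAt_pdf x).div (hasDerivAt_cdf x) (cdf_pos x).ne'

lemma mr_deriv_neg (x : ℝ) :
    (-x * stdNormalPdf x * stdNormalCdf x - stdNormalPdf x * stdNormalPdf x)
      / stdNormalCdf x ^ 2 < 0 := by
  apply div_neg_of_neg_of_pos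
  · nlinarith [mills x, pdf_pos x, cdf_pos x]
  · exact pow_pos (cdf_pos x) 2

/-- For L(θ) = A/θ, the critical point equation function
b(θ) = -log(q(θ)/q(0)) + θ q'(θ)/q(θ) is strictly decreasing on (0,∞). -/
theorem stmt_11 (μ : ℝ → ℝ) (hμ : ContDiff ℝ 2 μ)
    (hμ' : ∀ s, deriv μ s < 0) (hμ'' : ∀ s, deriv (deriv μ) s > 0)
    (xstar : ℝ) (M : ℕ) (hM : 1 ≤ M)
    (q : ℝ → ℝ) (hq : ∀ t, q t = stdNormalCdf (xstar - Real.sqrt M * μ (t / M)))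
    (b : ℝ → ℝ)
    (hb : ∀ t, b t = -Real.log (q t / q 0) + t * (deriv q t / q t)) :
    StrictAntiOn b (Set.Ioi 0) := by
  have hMpos : (0:ℝ) < M := by exact_mod_cast hM
  set c : ℝ := Real.sqrt M with hcdef
  have hc : 0 < c := Real.sqrt_pos.2 hMpos
  set h : ℝ → ℝ := fun t => xstar - c * μ (t / M) with hhdef
  set g : ℝ → ℝ := fun t => -(c / M) * deriv μ (t / M) with hgdef
  have hgpos : ∀ t, 0 < g t := by
    intro t
    have h1 : 0 < c / M := by positivity
    have h2 := hμ' (t / M)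
    simp only [hgdef]
    nlinarith
  have hμdiff : Differentiable ℝ μ := hμ.differentiable (by norm_num)
  have hμ1 : ContDiff ℝ 1 (deriv μ) := by
    have := (contDiff_succ_iff_deriv (n := 1)).mp (by exact_mod_cast hμ)
    exact this.2.2
  have hinner : ∀ t : ℝ, HasDerivAt (fun t : ℝ => t / M) ((M:ℝ))⁻¹ t := fun t => by
    simpa using (hasDerivAt_id t).div_const (M:ℝ)
  have hh : ∀ t, HasDerivAt h (g t) t := by
    intro t
    have h1 : HasDerivAt (fun t : ℝ => μ (t / M)) (deriv μ (t / M) * ((M:ℝ))⁻¹) t :=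
      (hμdiff (t / M)).hasDerivAt.comp t (hinner t)
    have := (h1.const_mul c).neg.const_add xstar
    refine this.congr_deriv ?_
    simp [hgdef]; ring
  have hg : ∀ t, HasDerivAt g (-(c / M) * (deriv (deriv μ) (t / M) * ((M:ℝ))⁻¹)) t := by
    intro t
    have h1 : HasDerivAt (fun t : ℝ => deriv μ (t / M))
        (deriv (deriv μ) (t / M) * ((M:ℝ))⁻¹) t :=
      (by have hd : Differentiable ℝ (deriv μ) := hμ1.differentiable (by norm_num)
          exact (hd (t / M)).hasDerivAt.comp t (hinner t))
    exact h1.const_mul _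
  have hgderiv_neg : ∀ t, -(c / M) * (deriv (deriv μ) (t / M) * ((M:ℝ))⁻¹) < 0 := by
    intro t
    have h1 : 0 < c / M := by positivity
    have h2 := hμ'' (t / M)
    have h3 : (0:ℝ) < ((M:ℝ))⁻¹ := by positivity
    have := mul_pos h1 (mul_pos h2 h3)
    linarith
  have hqpos : ∀ t, 0 < q t := fun t => by rw [hq t]; exact cdf_pos _
  have hqd : ∀ t, HasDerivAt q (stdNormalPdf (h t) * g t) t := by
    intro t
    have := ((hasDerivAt_cdf (h t)).comp t (hh t))
    refine HasDerivAt.congr_of_eventuallyEq this (Eventually.of_forall fun s => ?_)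
    rw [hq s]; rfl
  set r : ℝ → ℝ := fun t => g t * mr (h t) with hrdef
  have hq_cdf : ∀ t, q t = stdNormalCdf (h t) := fun t => hq t
  have hr_eq : ∀ t, deriv q t / q t = r t := by
    intro t
    rw [(hqd t).deriv, hq_cdf t]
    simp only [hrdef, mr]
    field_simp
  set D : ℝ → ℝ := fun t =>
    (-(c / M) * (deriv (deriv μ) (t / M) * ((M:ℝ))⁻¹)) * mr (h t)
      + g t * (((-(h t) * stdNormalPdf (h t) * stdNormalCdf (h t)
          - stdNormalPdf (h t) * stdNormalPdf (h t)) / stdNormalCdf (h t) ^ 2) * g t)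
    with hDdef
  have hrd : ∀ t, HasDerivAt r (D t) t := by
    intro t
    exact (hg t).mul ((hasDerivAt_mr (h t)).comp t (hh t))
  have hDneg : ∀ t, D t < 0 := by
    intro t
    have h1 := mul_neg_of_neg_of_pos (hgderiv_neg t) (mr_pos (h t))
    have h2 := mul_pos (hgpos t)
      (mul_pos (neg_pos.2 (mr_deriv_neg (h t))) (hgpos t))
    simp only [hDdef]
    nlinarith
  have hbd : ∀ t, HasDerivAt b (t * D t) t := by
    intro t
    have hb_eq : b = fun t => -Real.log (q t / q 0) + t * r t := by
      funext s
      rw [hb s, hr_eq s]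
    rw [hb_eq]
    have hlog : HasDerivAt (fun t => Real.log (q t / q 0))
        ((stdNormalPdf (h t) * g t / q 0) / (q t / q 0)) t :=
      HasDerivAt.log ((hqd t).div_const (q 0))
        (div_ne_zero (hqpos t).ne' (hqpos 0).ne')
    have hmul : HasDerivAt (fun t => t * r t) (1 * r t + t * D t) t :=
      (hasDerivAt_id t).mul (hrd t)
    have := hlog.neg.add hmul
    refine this.congr_deriv ?_
    have e1 : (stdNormalPdf (h t) * g t / q 0) / (q t / q 0) = r t := by
      rw [hq_cdf t]
      simp only [hrdef, mr]
      field_simp [(hqpos 0).ne']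
    rw [e1]
    ring
  refine strictAntiOn_of_deriv_neg (convex_Ioi 0)
    (fun x _ => (hbd x).continuousAt.continuousWithinAt) ?_
  intro x hx
  rw [interior_Ioi] at hx
  rw [(hbd x).deriv]
  exact mul_neg_of_pos_of_neg hx (hDneg x)
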